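/- The 5-dimensional nilpotent commutative associative algebra A₁₃ degenerates to A₂₁: the structure λ of A₂₁ lies in the closure of the GL(5,ℂ)-orbit O(μ) of the structure μ of A₁₃ (closure in the standard topology on the space of bilinear maps ℂ⁵ × ℂ⁵ → ℂ⁵). -/

import Mathlib

open ContinuousLinearMap

/-- The underlying space `ℂⁿ`. -/
abbrev Vn (n : ℕ) := Fin n → ℂ

/-- The space of bilinear maps `ℂⁿ × ℂⁿ → ℂⁿ` (as continuous linear maps in two
arguments), carrying its standard topology as a finite-dimensional complex vector space. -/
abbrev Bil (n : ℕ) := Vn n →L[ℂ] Vn n →L[ℂ] Vn n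

/-- The action of `GL(n, ℂ)` on bilinear maps: `(g · μ)(x, y) = g (μ (g⁻¹ x) (g⁻¹ y))`. -/
noncomputable def act {n : ℕ} (g : Vn n ≃L[ℂ] Vn n) (μ : Bil n) : Bil n :=
  ((compL ℂ (Vn n) (Vn n) (Vn n)).flip (g.symm : Vn n →L[ℂ] Vn n)).comp
    (((compL ℂ (Vn n) (Vn n) (Vn n)) (g : Vn n →L[ℂ] Vn n)).comp
      (μ.comp (g.symm : Vn n →L[ℂ] Vn n)))

@[simp] lemma act_apply {n : ℕ} (g : Vn n ≃L[ℂ] Vn n) (μ : Bil n) (x y : Vn n) :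
    act g μ x y = g (μ (g.symm x) (g.symm y)) := rfl

/-- The orbit `O(μ)` of a bilinear map under the `GL(n, ℂ)`-action. -/
noncomputable def orbit {n : ℕ} (μ : Bil n) : Set (Bil n) :=
  {ν | ∃ g : Vn n ≃L[ℂ] Vn n, ν = act g μ}

/-- The standard basis `e₁, …, e₅` of `ℂ⁵` (zero-indexed: `e i` is `e_{i+1}`). -/
def e (i : Fin 5) : Vn 5 := Pi.single i 1

/-- Multiplication table of the algebra `𝐀13` (entry `(i, j)` is `eᵢ · eⱼ`). -/
def tblA13 : Fin 5 → Fin 5 → Vn 5 :=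
  ![![0, e 4, 0, 0, 0],
   ![e 4, 0, 0, 0, 0],
   ![0, 0, e 3, e 4, 0],
   ![0, 0, e 4, 0, 0],
   ![0, 0, 0, 0, 0]]

/-- Multiplication table of the algebra `𝐀21` (entry `(i, j)` is `eᵢ · eⱼ`). -/
def tblA21 : Fin 5 → Fin 5 → Vn 5 :=
  ![![0, 0, 0, e 4, 0],
   ![0, 0, e 4, 0, 0],
   ![0, e 4, 0, 0, 0],
   ![e 4, 0, 0, 0, 0],
   ![0, 0, 0, 0, 0]]

/-!
Indices start at 0, as for `e`. For `t ≠ 0` let `g_t⁻¹` be the monomial map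
`e₀ ↦ e₀, e₁ ↦ t e₂, e₂ ↦ t e₃, e₃ ↦ t² e₁, e₄ ↦ t² e₄`. Transporting `μ` along it gives
`e₀e₃ = e₁e₂ = e₄` exactly, while the only other surviving product is `e₁e₁ = t e₂`.
So `g_t · μ = λ + t • δ` with `δ(x, y) = x₁ y₁ e₂`, which tends to `λ` as `t → 0`.
-/

theorem mem_closure_of_forall_add_unit_smul_mem {𝕜 E : Type*} [NontriviallyNormedField 𝕜]
    [AddCommGroup E] [TopologicalSpace E] [Module 𝕜 E] [ContinuousSMul 𝕜 E] [ContinuousAdd E]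
    {S : Set E} {x d : E} (h : ∀ t : 𝕜ˣ, x + (t : 𝕜) • d ∈ S) : x ∈ closure S := by
  have hlim : Filter.Tendsto (fun t : 𝕜 => x + t • d) (nhdsWithin 0 {0}ᶜ) (nhds x) :=
    ((by fun_prop : Continuous fun t : 𝕜 => x + t • d).tendsto' 0 x (by simp)).mono_left
      nhdsWithin_le_nhds
  refine mem_closure_of_tendsto hlim ?_
  filter_upwards [self_mem_nhdsWithin] with t ht using h (Units.mk0 t ht)

theorem ContinuousLinearMap.ext_single₂ {𝕜 ι M : Type*} [NormedField 𝕜] [Finite ι] [DecidableEq ι]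
    [AddCommGroup M] [TopologicalSpace M] [IsTopologicalAddGroup M] [Module 𝕜 M]
    [ContinuousConstSMul 𝕜 M] {f g : (ι → 𝕜) →L[𝕜] (ι → 𝕜) →L[𝕜] M}
    (h : ∀ i j, f (Pi.single i 1) (Pi.single j 1) = g (Pi.single i 1) (Pi.single j 1)) :
    f = g := by
  have := Fintype.ofFinite ι
  refine coe_injective <| (Pi.basisFun 𝕜 ι).ext fun i =>
    coe_injective <| (Pi.basisFun 𝕜 ι).ext fun j => ?_
  simpa using h i j

section Monomial

variable {𝕜 ι : Type*} [NontriviallyNormedField 𝕜] [CompleteSpace 𝕜] [Fintype ι] [DecidableEq ι]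

noncomputable def monomialEquiv (σ : Equiv.Perm ι) (w : ι → 𝕜ˣ) : (ι → 𝕜) ≃L[𝕜] (ι → 𝕜) :=
  ((LinearEquiv.piCongrRight fun i => LinearEquiv.smulOfUnit (w i)).trans
    (LinearEquiv.funCongrLeft 𝕜 𝕜 σ.symm)).toContinuousLinearEquiv

theorem monomialEquiv_single (σ : Equiv.Perm ι) (w : ι → 𝕜ˣ) (i : ι) :
    monomialEquiv σ w (Pi.single i 1) = (w i : 𝕜) • Pi.single (σ i) 1 := by
  ext k
  rcases eq_or_ne k (σ i) with rfl | hk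
  · simp [monomialEquiv, LinearEquiv.funCongrLeft_apply, LinearMap.funLeft,
      LinearEquiv.smulOfUnit, Units.smul_def]
  · simp [monomialEquiv, LinearEquiv.funCongrLeft_apply, LinearMap.funLeft, hk,
      Equiv.symm_apply_eq]

end Monomial

def cycle123 : Equiv.Perm (Fin 5) := Equiv.swap 1 3 * Equiv.swap 1 2

def weightsA13A21 (t : ℂˣ) : Fin 5 → ℂˣ := ![1, t, t, t ^ 2, t ^ 2]

noncomputable def sqCoord1 : Bil 5 := smulRight (proj 1) (smulRight (proj 1) (e 2))

theorem sqCoord1_apply (x y : Vn 5) : sqCoord1 x y = (x 1 * y 1) • e 2 := by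
  simp [sqCoord1, mul_smul]

theorem act_A13_eq_A21_add_smul (μ lam : Bil 5)
    (hμ : ∀ i j : Fin 5, μ (e i) (e j) = tblA13 i j)
    (hlam : ∀ i j : Fin 5, lam (e i) (e j) = tblA21 i j) (t : ℂˣ) :
    act (monomialEquiv cycle123 (weightsA13A21 t)).symm μ = lam + (t : ℂ) • sqCoord1 := by
  have hg : ∀ k, monomialEquiv cycle123 (weightsA13A21 t) (e k) =
      (weightsA13A21 t k : ℂ) • e (cycle123 k) :=
    monomialEquiv_single _ _
  refine ContinuousLinearMap.ext_single₂ fun i j => ?_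
  rw [act_apply, ContinuousLinearEquiv.symm_symm, ContinuousLinearEquiv.symm_apply_eq]
  simp only [← e.eq_1, hg, map_smul, smul_apply, hμ, add_apply, hlam, sqCoord1_apply]
  fin_cases i <;> fin_cases j <;>
    simp [cycle123, weightsA13A21, tblA13, tblA21, e, monomialEquiv_single,
      Equiv.swap_apply_of_ne_of_ne, smul_smul, ← sq]

/-- The $5$-dimensional nilpotent commutative associative algebra `𝐀13` degenerates to
`𝐀21`: the structure `λ` of `𝐀21` lies in the closure of
the `GL(5, ℂ)`-orbit `O(μ)` of the structure `μ` of `𝐀13`. -/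
theorem A13_deg_A21 (μ lam : Bil 5)
    (hμ : ∀ i j : Fin 5, μ (e i) (e j) = tblA13 i j)
    (hlam : ∀ i j : Fin 5, lam (e i) (e j) = tblA21 i j) :
    lam ∈ closure (orbit μ) :=
  mem_closure_of_forall_add_unit_smul_mem fun t =>
    ⟨(monomialEquiv cycle123 (weightsA13A21 t)).symm,
      (act_A13_eq_A21_add_smul μ lam hμ hlam t).symm⟩
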